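/- Let E ⊆ ℝⁿ be permutation invariant, φ : ℝⁿ → ℝ be permutation invariant, and h : ℝⁿ → ℝ. If a maximizes h + φ over E and d is an E-subgradient of h at a (i.e., h(x) − h(a) ≥ ⟨d, x − a⟩ for all x ∈ E), then ⟨a, d⟩ = ⟨a↓, d↓⟩. -/

import Mathlib

/-!
Both `dsort a` and `dsort d` are `a` and `d` reindexed by sorting permutations, so
`⟨a↓, d↓⟩ = ⟨a ∘ σ, d⟩` for some permutation `σ`. Since `a ∘ σ ∈ E` has the same value of `φ`,
maximality of `a` gives `h (a ∘ σ) ≤ h a`, and the subgradient inequality turns this into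
`⟨a ∘ σ, d⟩ ≤ ⟨a, d⟩`. The reverse inequality `⟨a, d⟩ ≤ ⟨a↓, d↓⟩` is the rearrangement inequality.
-/

open Finset

/-- Decreasing rearrangement of a vector in ℝⁿ. -/
noncomputable def dsort {n : ℕ} (v : Fin n → ℝ) : Fin n → ℝ :=
  fun i => - ((fun j => - v j) ∘ Tuple.sort (fun j => - v j)) i

lemma dsort_apply {n : ℕ} (v : Fin n → ℝ) (i : Fin n) :
    dsort v i = v (Tuple.sort (fun j => -v j) i) := by
  simp [dsort]

lemma dsort_sort_symm_apply {n : ℕ} (v : Fin n → ℝ) (i : Fin n) :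
    dsort v ((Tuple.sort fun j => -v j).symm i) = v i := by
  rw [dsort_apply, Equiv.apply_symm_apply]

lemma antitone_dsort {n : ℕ} (v : Fin n → ℝ) : Antitone (dsort v) := by
  intro i j hij
  have hsort := Tuple.monotone_sort (fun j => -v j) hij
  simp only [Function.comp_apply] at hsort
  simp only [dsort, Function.comp_apply]
  linarith

lemma sum_comp_perm_mul_comp_perm {ι : Type*} [Fintype ι] (f g : ι → ℝ) (τ ρ : Equiv.Perm ι) :
    ∑ i, f (τ i) * g (ρ i) = ∑ i, f (τ (ρ.symm i)) * g i := by
  rw [← Equiv.sum_comp ρ (fun i => f (τ (ρ.symm i)) * g i)]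
  simp only [Equiv.symm_apply_apply]

lemma exists_perm_sum_dsort_mul_dsort_eq {n : ℕ} (a d : Fin n → ℝ) :
    ∃ σ : Equiv.Perm (Fin n), ∑ i, dsort a i * dsort d i = ∑ i, a (σ i) * d i := by
  refine ⟨(Tuple.sort fun j => -d j).symm.trans (Tuple.sort fun j => -a j), ?_⟩
  simp only [dsort_apply]
  exact sum_comp_perm_mul_comp_perm a d _ _

lemma sum_mul_le_sum_dsort_mul_dsort {n : ℕ} (a d : Fin n → ℝ) :
    ∑ i, a i * d i ≤ ∑ i, dsort a i * dsort d i := by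
  calc ∑ i, a i * d i
      = ∑ i, dsort a ((Tuple.sort fun j => -a j).symm i) *
          dsort d ((Tuple.sort fun j => -d j).symm i) := by
        simp only [dsort_sort_symm_apply]
    _ = ∑ i, dsort a ((Tuple.sort fun j => -a j).symm ((Tuple.sort fun j => -d j) i)) *
          dsort d i := by
        rw [sum_comp_perm_mul_comp_perm, Equiv.symm_symm]
    _ ≤ ∑ i, dsort a i * dsort d i :=
        ((antitone_dsort a).monovary (antitone_dsort d)).sum_comp_perm_mul_le_sum_mul
          (σ := (Tuple.sort fun j => -d j).trans (Tuple.sort fun j => -a j).symm)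

lemma sum_mul_le_sum_mul_of_maximizer_of_subgradient {ι : Type*} [Fintype ι]
    {E : Set (ι → ℝ)} {φ h : (ι → ℝ) → ℝ} {a d x : ι → ℝ} (hx : x ∈ E) (hφx : φ x = φ a)
    (hmax : ∀ x ∈ E, h x + φ x ≤ h a + φ a)
    (hd : ∀ x ∈ E, h x - h a ≥ ∑ i, d i * (x i - a i)) :
    ∑ i, x i * d i ≤ ∑ i, a i * d i := by
  have hsub : ∑ i, d i * (x i - a i) = ∑ i, x i * d i - ∑ i, a i * d i := by
    rw [← sum_sub_distrib]
    exact sum_congr rfl fun i _ => by ring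
  linarith [hmax x hx, hd x hx]

theorem stmt4_general {n : ℕ} (E : Set (Fin n → ℝ))
    (hinv : ∀ x ∈ E, ∀ σ : Equiv.Perm (Fin n), (fun i => x (σ i)) ∈ E)
    (φ h : (Fin n → ℝ) → ℝ)
    (hφ : ∀ x, ∀ σ : Equiv.Perm (Fin n), φ (fun i => x (σ i)) = φ x)
    (a : Fin n → ℝ) (ha : a ∈ E)
    (hmax : ∀ x ∈ E, h x + φ x ≤ h a + φ a)
    (d : Fin n → ℝ)
    (hd : ∀ x ∈ E, h x - h a ≥ ∑ i, d i * (x i - a i)) :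
    ∑ i, a i * d i = ∑ i, dsort a i * dsort d i := by
  obtain ⟨σ, hσ⟩ := exists_perm_sum_dsort_mul_dsort_eq a d
  refine le_antisymm (sum_mul_le_sum_dsort_mul_dsort a d) ?_
  rw [hσ]
  exact sum_mul_le_sum_mul_of_maximizer_of_subgradient (hinv a ha σ) (hφ a σ) hmax hd

theorem stmt4 {n : ℕ} (E : Set (Fin n → ℝ)) (hE : E.Nonempty)
    (hinv : ∀ x ∈ E, ∀ σ : Equiv.Perm (Fin n), (fun i => x (σ i)) ∈ E)
    (φ h : (Fin n → ℝ) → ℝ)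
    (hφ : ∀ x, ∀ σ : Equiv.Perm (Fin n), φ (fun i => x (σ i)) = φ x)
    (a : Fin n → ℝ) (ha : a ∈ E)
    (hmax : ∀ x ∈ E, h x + φ x ≤ h a + φ a)
    (d : Fin n → ℝ)
    (hd : ∀ x ∈ E, h x - h a ≥ ∑ i, d i * (x i - a i)) :
    ∑ i, a i * d i = ∑ i, dsort a i * dsort d i :=
  stmt4_general E hinv φ h hφ a ha hmax d hd
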